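/- Let p > 3 be prime and b ∈ F_p nonzero. For S_λ = Σ_{x ∈ F_p} σ(x³ + λ x² + b x), the variance of (S_λ)_{λ∈F_p} equals p − 1 − σ(b) − 1/p. -/

import Mathlib

/-!
For `x ≠ 0` we have `x³ + λx² + bx = x² (λ + t x)` with `t x = x + b / x`, so
`S_λ = ∑_{x ≠ 0} σ(λ + t x)` is a sum of translates of `σ`. Summing over `λ`, each
translate contributes `0`, so the mean vanishes, while `∑_λ σ(λ + c) σ(λ + d)` is `p - 1` or `-1`
according as `c = d` or not. Hence `∑_λ S_λ² = p N - (p - 1)²`, where `N` counts the pairs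
`x, y ≠ 0` with `t x = t y`, i.e. with `y = x` or `y = b / x`; these two families overlap
exactly at the `1 + σ(b)` square roots of `b`, so `N = 2 (p - 1) - 1 - σ(b)`.
-/

open Finset

theorem add_div_eq_add_div_iff {F : Type*} [Field F] {b x y : F} (hx : x ≠ 0) (hy : y ≠ 0) :
    x + b / x = y + b / y ↔ y = x ∨ y = b / x := by
  have key : x + b / x - (y + b / y) = (x - y) * (x * y - b) / (x * y) := by
    field_simp; ring
  rw [← sub_eq_zero, key, div_eq_zero_iff, or_iff_left (mul_ne_zero hx hy), mul_eq_zero,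
    sub_eq_zero, sub_eq_zero, eq_div_iff hx, mul_comm y x, eq_comm (a := x)]

section

variable {F : Type*} [Field F] [Fintype F] [DecidableEq F]

theorem quadraticChar_sum_mul_add (hF : ringChar F ≠ 2) {u : F} (hu : u ≠ 0) (v : F) :
    ∑ l : F, quadraticChar F (u * l + v) = 0 := by
  rw [← quadraticChar_sum_zero hF]
  exact ((Equiv.mulLeft₀ u hu).trans (Equiv.addRight v)).sum_comp (quadraticChar F)

theorem quadraticChar_mul_self (a : F) :
    quadraticChar F a * quadraticChar F a = if a = 0 then 0 else 1 := by
  split_ifs with ha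
  · simp [ha]
  · rw [← map_mul, ← sq, quadraticChar_sq_one' ha]

theorem quadraticChar_sum_mul_self_add (hF : ringChar F ≠ 2) {e : F} (he : e ≠ 0) :
    ∑ u : F, quadraticChar F u * quadraticChar F (u + e) = -1 := by
  -- `u (u + e) = u² (e u⁻¹ + 1)` for `u ≠ 0`; the correction term accounts for `u = 0`
  have hterm (u : F) : quadraticChar F u * quadraticChar F (u + e) =
      quadraticChar F (e * u⁻¹ + 1) - if u = 0 then 1 else 0 := by
    split_ifs with hu
    · simp [hu]
    · rw [← map_mul, show u * (u + e) = u ^ 2 * (e * u⁻¹ + 1) by field_simp; ring, map_mul,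
        quadraticChar_sq_one' hu, one_mul, sub_zero]
  rw [sum_congr rfl fun u _ => hterm u, sum_sub_distrib, sum_ite_eq', if_pos (mem_univ _),
    Fintype.sum_bijective _ inv_involutive.bijective _ (fun w => quadraticChar F (e * w + 1))
      fun _ => rfl, quadraticChar_sum_mul_add hF he, zero_sub]

theorem quadraticChar_sum_add_mul_add (hF : ringChar F ≠ 2) (c d : F) :
    ∑ l : F, quadraticChar F (l + c) * quadraticChar F (l + d) =
      if c = d then (Fintype.card F : ℤ) - 1 else -1 := by
  rw [Fintype.sum_equiv (Equiv.addRight c) _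
    (fun u => quadraticChar F u * quadraticChar F (u + (d - c))) fun l => by simp]
  split_ifs with hcd
  · simp only [hcd, sub_self, add_zero, quadraticChar_mul_self]
    simp [sum_ite, filter_ne', Nat.cast_pred Fintype.card_pos]
  · exact quadraticChar_sum_mul_self_add hF (sub_ne_zero.mpr (Ne.symm hcd))

theorem sum_sum_quadraticChar_add (hF : ringChar F ≠ 2) {ι : Type*} (s : Finset ι)
    (t : ι → F) :
    ∑ l : F, ∑ i ∈ s, quadraticChar F (l + t i) = 0 := by
  rw [sum_comm]
  refine sum_eq_zero fun i _ => ?_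
  simpa using quadraticChar_sum_mul_add hF one_ne_zero (t i)

theorem sum_sq_sum_quadraticChar_add (hF : ringChar F ≠ 2) {ι : Type*} [DecidableEq ι]
    (s : Finset ι) (t : ι → F) :
    ∑ l : F, (∑ i ∈ s, quadraticChar F (l + t i)) ^ 2 =
      Fintype.card F * ∑ i ∈ s, (#{j ∈ s | t i = t j} : ℤ) - #s ^ 2 := by
  calc ∑ l : F, (∑ i ∈ s, quadraticChar F (l + t i)) ^ 2
      = ∑ i ∈ s, ∑ j ∈ s, ∑ l : F,
          quadraticChar F (l + t i) * quadraticChar F (l + t j) := by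
        simp only [sq, sum_mul_sum]
        rw [sum_comm]
        exact sum_congr rfl fun i _ => sum_comm
    _ = ∑ i ∈ s, ∑ j ∈ s, ((Fintype.card F : ℤ) * (if t i = t j then 1 else 0) - 1) := by
        refine sum_congr rfl fun i _ => sum_congr rfl fun j _ => ?_
        rw [quadraticChar_sum_add_mul_add hF]
        split_ifs <;> ring
    _ = _ := by
        simp only [sum_sub_distrib, ← mul_sum, sum_boole, sum_const, nsmul_eq_mul, mul_one]
        ring

theorem quadraticChar_cubic_eq {x : F} (hx : x ≠ 0) (l b : F) :
    quadraticChar F (x ^ 3 + l * x ^ 2 + b * x) = quadraticChar F (l + (x + b / x)) := by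
  rw [show x ^ 3 + l * x ^ 2 + b * x = x ^ 2 * (l + (x + b / x)) by field_simp; ring, map_mul,
    quadraticChar_sq_one' hx, one_mul]

theorem sum_quadraticChar_cubic_eq (l b : F) :
    ∑ x : F, quadraticChar F (x ^ 3 + l * x ^ 2 + b * x) =
      ∑ x ∈ univ.erase 0, quadraticChar F (l + (x + b / x)) := by
  rw [← sum_erase univ (a := 0) (by simp)]
  exact sum_congr rfl fun x hx => quadraticChar_cubic_eq (ne_of_mem_erase hx) l b

theorem card_filter_add_div_eq {b x : F} (hb : b ≠ 0) (hx : x ≠ 0) :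
    #{y ∈ univ.erase (0 : F) | x + b / x = y + b / y} = if x ^ 2 = b then 1 else 2 := by
  have hfilter : {y ∈ univ.erase (0 : F) | x + b / x = y + b / y} = {x, b / x} := by
    ext y
    simp only [mem_filter, mem_erase, mem_univ, and_true, mem_insert, mem_singleton]
    constructor
    · rintro ⟨hy, h⟩
      exact (add_div_eq_add_div_iff hx hy).mp h
    · rintro (rfl | rfl)
      · exact ⟨hx, rfl⟩
      · have hbx := div_ne_zero hb hx
        exact ⟨hbx, (add_div_eq_add_div_iff hx hbx).mpr (Or.inr rfl)⟩
  simp only [hfilter, card_insert_eq_ite, mem_singleton, card_singleton, eq_div_iff hx, ← sq]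

theorem sum_card_filter_add_div_eq (hF : ringChar F ≠ 2) {b : F} (hb : b ≠ 0) :
    ∑ x ∈ univ.erase (0 : F), (#{y ∈ univ.erase (0 : F) | x + b / x = y + b / y} : ℤ) =
      2 * (Fintype.card F - 1) - (quadraticChar F b + 1) := by
  have hroots : {x ∈ univ.erase (0 : F) | x ^ 2 = b} = {x : F | x ^ 2 = b}.toFinset := by
    ext x
    simp only [mem_filter, mem_erase, mem_univ, and_true, Set.mem_toFinset, Set.mem_ofPred_eq,
      and_iff_right_iff_imp]
    rintro h rfl
    exact hb (by rw [← h]; ring)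
  calc ∑ x ∈ univ.erase (0 : F), (#{y ∈ univ.erase (0 : F) | x + b / x = y + b / y} : ℤ)
      = ∑ x ∈ univ.erase (0 : F), (2 - if x ^ 2 = b then 1 else 0) := by
        refine sum_congr rfl fun x hx => ?_
        rw [card_filter_add_div_eq hb (ne_of_mem_erase hx)]
        split_ifs <;> norm_num
    _ = _ := by
        rw [sum_sub_distrib, sum_const, sum_boole, hroots, quadraticChar_card_sqrts hF,
          card_erase_of_mem (mem_univ _), card_univ, nsmul_eq_mul, Nat.cast_pred Fintype.card_pos]
        ring

theorem sum_sq_sum_quadraticChar_cubic (hF : ringChar F ≠ 2) {b : F} (hb : b ≠ 0) :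
    ∑ l : F, (∑ x : F, quadraticChar F (x ^ 3 + l * x ^ 2 + b * x)) ^ 2 =
      (Fintype.card F : ℤ) ^ 2 - Fintype.card F - 1 - Fintype.card F * quadraticChar F b := by
  simp only [sum_quadraticChar_cubic_eq]
  rw [sum_sq_sum_quadraticChar_add hF, sum_card_filter_add_div_eq hF hb,
    card_erase_of_mem (mem_univ _), card_univ, Nat.cast_pred Fintype.card_pos]
  ring

theorem sum_sum_quadraticChar_cubic (hF : ringChar F ≠ 2) (b : F) :
    ∑ l : F, ∑ x : F, quadraticChar F (x ^ 3 + l * x ^ 2 + b * x) = 0 := by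
  simp only [sum_quadraticChar_cubic_eq]
  exact sum_sum_quadraticChar_add hF _ _

end

theorem stmt8 (p : ℕ) [Fact p.Prime] (hp : 3 < p) (b : ZMod p) (hb : b ≠ 0) :
    ((((∑ l : ZMod p, (∑ x : ZMod p, quadraticChar (ZMod p) (x ^ 3 + l * x ^ 2 + b * x)) ^ 2) : ℤ) : ℚ) / p) -
      ((((∑ l : ZMod p, ∑ x : ZMod p, quadraticChar (ZMod p) (x ^ 3 + l * x ^ 2 + b * x)) : ℤ) : ℚ) / p) ^ 2
      = p - 1 - quadraticChar (ZMod p) b - 1 / p := by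
  have hF : ringChar (ZMod p) ≠ 2 := by rw [ZMod.ringChar_zmod_n]; omega
  have hp0 : (p : ℚ) ≠ 0 := Nat.cast_ne_zero.mpr (Fact.out : p.Prime).ne_zero
  rw [sum_sq_sum_quadraticChar_cubic hF hb, sum_sum_quadraticChar_cubic hF, ZMod.card]
  push_cast
  field_simp
  ring
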